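/- arXiv:1311.5636 — 4 statements merged into one kernel-verified Lean document; each statement's English description precedes it below -/
import Mathlib

section
/- Let μ be a probability measure on a type X, let φ : X → H be a measurable map into a finite-dimensional real inner product space H, and let y : X → ℝ, with φ·y Bochner integrable. Define κ(x,x') = ⟨φ(x), φ(x')⟩. Then sup_{w : ‖w‖ ≤ 1} ∫ y(x)⟨w, φ(x)⟩ dμ(x) = sqrt( ∬ y(x) y(x') κ(x,x') dμ(x) dμ(x') ). -/
/-!
Both sides are expressions in the mean embedding `m = ∫ y • φ ∂μ`: the correlation of `w` with
the target is `⟪w, m⟫`, and the double integral is `⟪m, m⟫ = ‖m‖²`, both by moving the inner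
product through the Bochner integral. By Cauchy–Schwarz the supremum of `⟪w, m⟫` over the unit
ball is `‖m‖`, attained at `w = m / ‖m‖`.
-/

open MeasureTheory
open scoped RealInnerProductSpace

section UnitBall

variable {H : Type*} [NormedAddCommGroup H] [InnerProductSpace ℝ H]

lemma norm_inv_norm_smul_le_one (m : H) : ‖‖m‖⁻¹ • m‖ ≤ 1 := by
  rw [norm_smul, norm_inv, norm_norm]
  exact inv_mul_le_one_of_le₀ le_rfl (norm_nonneg m)

lemma iSup_inner_of_norm_le_one (m : H) :
    ⨆ w : {w : H // ‖w‖ ≤ 1}, ⟪(w : H), m⟫ = ‖m‖ := by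
  have inner_le : ∀ w : {w : H // ‖w‖ ≤ 1}, ⟪(w : H), m⟫ ≤ ‖m‖ := fun w =>
    (real_inner_le_norm _ _).trans (mul_le_of_le_one_left (norm_nonneg m) w.2)
  -- `‖m‖⁻¹ • m` attains the bound, also for `m = 0` since `0⁻¹ = 0`.
  have attained : ⟪‖m‖⁻¹ • m, m⟫ = ‖m‖ := by
    rw [real_inner_smul_left, real_inner_self_eq_norm_sq, sq, ← mul_assoc, inv_mul_mul_self]
  have : Nonempty {w : H // ‖w‖ ≤ 1} := ⟨⟨0, by simp⟩⟩
  exact le_antisymm (ciSup_le inner_le)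
    (attained ▸ le_ciSup ⟨‖m‖, Set.forall_mem_range.2 inner_le⟩ ⟨_, norm_inv_norm_smul_le_one m⟩)

end UnitBall

lemma integral_integral_inner_eq_norm_integral_sq {X : Type*} [MeasurableSpace X] {μ : Measure X}
    {H : Type*} [NormedAddCommGroup H] [InnerProductSpace ℝ H] [CompleteSpace H]
    {f : X → H} (hf : Integrable f μ) :
    ∫ x, ∫ x', ⟪f x, f x'⟫ ∂μ ∂μ = ‖∫ x, f x ∂μ‖ ^ 2 := by
  have inner_integral : ∀ x, ∫ x', ⟪f x, f x'⟫ ∂μ = ⟪∫ x', f x' ∂μ, f x⟫ := fun x => by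
    rw [integral_inner hf, real_inner_comm]
  simp_rw [inner_integral]
  rw [integral_inner hf, real_inner_self_eq_norm_sq]

theorem stmt1_general {X : Type*} [MeasurableSpace X] (μ : Measure X)
    {H : Type*} [NormedAddCommGroup H] [InnerProductSpace ℝ H] [FiniteDimensional ℝ H]
    (φ : X → H) (y : X → ℝ)
    (hInt : Integrable (fun x => y x • φ x) μ) :
    (⨆ w : {w : H // ‖w‖ ≤ 1}, ∫ x, y x * ⟪(w : H), φ x⟫ ∂μ)
      = Real.sqrt (∫ x, ∫ x', y x * y x' * ⟪φ x, φ x'⟫ ∂μ ∂μ) := by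
  set m : H := ∫ x, y x • φ x ∂μ
  have correlation : ∀ w : H, ∫ x, y x * ⟪w, φ x⟫ ∂μ = ⟪w, m⟫ := fun w => by
    simp_rw [← real_inner_smul_right]
    exact integral_inner hInt w
  have alignment : ∫ x, ∫ x', y x * y x' * ⟪φ x, φ x'⟫ ∂μ ∂μ = ‖m‖ ^ 2 := by
    have h := integral_integral_inner_eq_norm_integral_sq hInt
    simp_rw [real_inner_smul_left, real_inner_smul_right, ← mul_assoc] at h
    exact h
  simp_rw [correlation, alignment, Real.sqrt_sq (norm_nonneg m)]
  exact iSup_inner_of_norm_le_one m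

theorem stmt1 {X : Type*} [MeasurableSpace X] (μ : Measure X) [IsProbabilityMeasure μ]
    {H : Type*} [NormedAddCommGroup H] [InnerProductSpace ℝ H] [FiniteDimensional ℝ H]
    [MeasurableSpace H] [BorelSpace H]
    (φ : X → H) (y : X → ℝ) (hφ : Measurable φ) (hy : Measurable y)
    (hInt : Integrable (fun x => y x • φ x) μ) :
    (⨆ w : {w : H // ‖w‖ ≤ 1}, ∫ x, y x * ⟪(w : H), φ x⟫ ∂μ)
      = Real.sqrt (∫ x, ∫ x', y x * y x' * ⟪φ x, φ x'⟫ ∂μ ∂μ) :=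
  stmt1_general μ φ y hInt
end

section
/- Let (Ω, μ) be a probability space, y : Ω → ℝ, and let x_S and x_i be random variables with x_i independent of the pair (x_S, y). Let κ_S be a positive semidefinite kernel on the range of x_S (all quantities bounded measurable). Define A_S = E_{ω,ω' iid}[y(ω) y(ω') κ_S(x_S(ω), x_S(ω'))] and A_{S∪{i}} = E[y y' κ_S(x_S, x_S') exp(-γ(x_i - x_i')²)] for γ ≥ 0. Then A_{S∪{i}} ≤ A_S. -/
open MeasureTheory ProbabilityTheory

/-!
Independence of `xi` from `(xS, y)` splits the double integral of the product kernel as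
`A_{S ∪ {i}} = α * A_S` with `α = E[exp (-γ (xi - xi')²)] ≤ 1`, so it suffices that `A_S ≥ 0`.
For that, draw `m` i.i.d. samples: the expectation of the nonnegative quadratic form
`∑ j, ∑ k, y_j y_k κS(x_j, x_k)` is `m ((m - 1) A_S + B)` with `B` the diagonal term, and letting
`m → ∞` forces `A_S ≥ 0`.
-/

section

variable {Ω : Type*} [MeasurableSpace Ω] {μ : Measure Ω}

theorem ProbabilityTheory.IndepFun.integral_integral_mul [SFinite μ] {α β : Type*}
    [MeasurableSpace α] [MeasurableSpace β] {X : Ω → α} {Y : Ω → β} (hXY : IndepFun X Y μ)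
    (hX : Measurable X) (hY : Measurable Y)
    {f : α → α → ℝ} {g : β → β → ℝ} (hf : Measurable (Function.uncurry f))
    (hg : Measurable (Function.uncurry g)) :
    ∫ ω, ∫ ω', f (X ω) (X ω') * g (Y ω) (Y ω') ∂μ ∂μ
      = (∫ ω, ∫ ω', f (X ω) (X ω') ∂μ ∂μ) * ∫ ω, ∫ ω', g (Y ω) (Y ω') ∂μ ∂μ := by
  have inner (ω : Ω) : ∫ ω', f (X ω) (X ω') * g (Y ω) (Y ω') ∂μ
      = (∫ ω', f (X ω) (X ω') ∂μ) * ∫ ω', g (Y ω) (Y ω') ∂μ :=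
    (hXY.comp (hf.comp measurable_prodMk_left) (hg.comp measurable_prodMk_left))
      |>.integral_fun_mul_eq_mul_integral
        (hf.comp measurable_prodMk_left |>.comp hX).aestronglyMeasurable
        (hg.comp measurable_prodMk_left |>.comp hY).aestronglyMeasurable
  have hF : Measurable fun a => ∫ ω', f a (X ω') ∂μ :=
    (hf.comp (measurable_fst.prodMk (hX.comp measurable_snd))).stronglyMeasurable
      |>.integral_prod_right' |>.measurable
  have hG : Measurable fun b => ∫ ω', g b (Y ω') ∂μ :=
    (hg.comp (measurable_fst.prodMk (hY.comp measurable_snd))).stronglyMeasurable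
      |>.integral_prod_right' |>.measurable
  simp_rw [inner]
  exact (hXY.comp hF hG).integral_fun_mul_eq_mul_integral
    (hF.comp hX).aestronglyMeasurable (hG.comp hY).aestronglyMeasurable

variable [IsProbabilityMeasure μ] {ι : Type*} [Fintype ι] {K : Ω → Ω → ℝ}

theorem MeasureTheory.Measure.pi_map_eval_prodMk_eval {i j : ι} (hij : i ≠ j) :
    (Measure.pi fun _ : ι => μ).map (fun x => (x i, x j)) = μ.prod μ := by
  have hind : IndepFun (fun x : ι → Ω => x i) (fun x => x j) (Measure.pi fun _ => μ) :=
    (iIndepFun_pi (X := fun _ => id) fun _ => aemeasurable_id).indepFun hij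
  rw [hind.map_prod_eq_prod_map_map (measurable_pi_apply i).aemeasurable
    (measurable_pi_apply j).aemeasurable, (measurePreserving_eval _ i).map_eq,
    (measurePreserving_eval _ j).map_eq]

theorem integrable_comp_eval_eval (hK : Integrable (Function.uncurry K) (μ.prod μ))
    (hdiag : Integrable (fun ω => K ω ω) μ) (i j : ι) :
    Integrable (fun x => K (x i) (x j)) (Measure.pi fun _ : ι => μ) := by
  rcases eq_or_ne i j with rfl | hij
  · exact integrable_comp_eval (μ := fun _ => μ) (f := fun ω => K ω ω) hdiag
  · rw [← Measure.pi_map_eval_prodMk_eval (μ := μ) hij] at hK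
    exact hK.comp_measurable (by fun_prop)

theorem integral_comp_eval_eval [DecidableEq ι]
    (hK : Integrable (Function.uncurry K) (μ.prod μ))
    (hdiag : Integrable (fun ω => K ω ω) μ) (i j : ι) :
    ∫ x, K (x i) (x j) ∂(Measure.pi fun _ : ι => μ)
      = if i = j then ∫ ω, K ω ω ∂μ else ∫ p, Function.uncurry K p ∂(μ.prod μ) := by
  split_ifs with hij
  · subst hij
    exact integral_comp_eval (μ := fun _ => μ) (f := fun ω => K ω ω) hdiag.aestronglyMeasurable
  · rw [← Measure.pi_map_eval_prodMk_eval (μ := μ) hij] at hK ⊢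
    exact (integral_map (by fun_prop) hK.aestronglyMeasurable).symm

theorem integral_pi_sum_sum (hK : Integrable (Function.uncurry K) (μ.prod μ))
    (hdiag : Integrable (fun ω => K ω ω) μ) :
    ∫ x, ∑ i, ∑ j, K (x i) (x j) ∂(Measure.pi fun _ : ι => μ)
      = Fintype.card ι * ((Fintype.card ι - 1) * ∫ p, Function.uncurry K p ∂(μ.prod μ)
        + ∫ ω, K ω ω ∂μ) := by
  classical
  rw [integral_finsetSum _ fun i _ =>
    integrable_finsetSum _ fun j _ => integrable_comp_eval_eval hK hdiag i j]
  simp_rw [integral_finsetSum _ fun j _ => integrable_comp_eval_eval hK hdiag _ j,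
    integral_comp_eval_eval hK hdiag]
  have split (i j : ι) :
      (if i = j then ∫ ω, K ω ω ∂μ else ∫ p, Function.uncurry K p ∂(μ.prod μ))
      = ∫ p, Function.uncurry K p ∂(μ.prod μ)
        + if i = j then ∫ ω, K ω ω ∂μ - ∫ p, Function.uncurry K p ∂(μ.prod μ) else 0 := by
    split_ifs <;> ring
  simp only [split, Finset.sum_add_distrib, Finset.sum_ite_eq, Finset.mem_univ, if_true,
    Finset.sum_const, Finset.card_univ, nsmul_eq_mul]
  ring

theorem integral_integral_nonneg_of_forall_sum_sum_nonneg
    (hK : Integrable (Function.uncurry K) (μ.prod μ))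
    (hdiag : Integrable (fun ω => K ω ω) μ)
    (hsum : ∀ (m : ℕ) (p : Fin m → Ω), 0 ≤ ∑ i, ∑ j, K (p i) (p j)) :
    0 ≤ ∫ ω, ∫ ω', K ω ω' ∂μ ∂μ := by
  rw [integral_integral hK]
  change 0 ≤ ∫ p, Function.uncurry K p ∂(μ.prod μ)
  set A := ∫ p, Function.uncurry K p ∂(μ.prod μ)
  set B := ∫ ω, K ω ω ∂μ
  have hsample (n : ℕ) : 0 ≤ n * A + B := by
    have h := integral_pi_sum_sum (ι := Fin (n + 1)) hK hdiag ▸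
      integral_nonneg fun x => hsum (n + 1) x
    simp only [Fintype.card_fin, Nat.cast_add, Nat.cast_one, add_sub_cancel_right] at h
    exact nonneg_of_mul_nonneg_right h (by positivity)
  by_contra! hA
  obtain ⟨n, hn⟩ := exists_nat_gt (B / -A)
  have := (div_lt_iff₀ (neg_pos.mpr hA)).mp hn
  linarith [hsample n]

end

theorem stmt5 {Ω E : Type*} [MeasurableSpace Ω] [MeasurableSpace E]
    (μ : Measure Ω) [IsProbabilityMeasure μ]
    (y : Ω → ℝ) (xS : Ω → E) (xi : Ω → ℝ)
    (hy : Measurable y) (hxS : Measurable xS) (hxi : Measurable xi)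
    (hyb : ∃ C : ℝ, ∀ ω, |y ω| ≤ C)
    (hindep : IndepFun xi (fun ω => (xS ω, y ω)) μ)
    (κS : E → E → ℝ) (hκm : Measurable fun p : E × E => κS p.1 p.2)
    (hκb : ∃ C : ℝ, ∀ e e', |κS e e'| ≤ C)
    (hpsd : ∀ (m : ℕ) (c : Fin m → ℝ) (p : Fin m → E),
      0 ≤ ∑ i, ∑ j, c i * c j * κS (p i) (p j))
    (γ : ℝ) (hγ : 0 ≤ γ) :
    (∫ ω, ∫ ω', y ω * y ω' * κS (xS ω) (xS ω') *
        Real.exp (-γ * (xi ω - xi ω') ^ 2) ∂μ ∂μ)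
      ≤ ∫ ω, ∫ ω', y ω * y ω' * κS (xS ω) (xS ω') ∂μ ∂μ := by
  obtain ⟨Cy, hCy⟩ := hyb
  obtain ⟨Cκ, hCκ⟩ := hκb
  have hbound (ω ω' : Ω) : |y ω * y ω' * κS (xS ω) (xS ω')| ≤ Cy * Cy * Cκ := by
    rw [abs_mul, abs_mul]
    exact mul_le_mul
      (mul_le_mul (hCy ω) (hCy ω') (abs_nonneg _) ((abs_nonneg _).trans (hCy ω)))
      (hCκ _ _) (abs_nonneg _) (mul_self_nonneg Cy)
  have hA : 0 ≤ ∫ ω, ∫ ω', y ω * y ω' * κS (xS ω) (xS ω') ∂μ ∂μ :=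
    integral_integral_nonneg_of_forall_sum_sum_nonneg
      (.of_bound (by fun_prop) _ (.of_forall fun p => hbound p.1 p.2))
      (.of_bound (by fun_prop) _ (.of_forall fun ω => hbound ω ω))
      fun m p => hpsd m (fun i => y (p i)) (fun i => xS (p i))
  have hα : ∫ ω, ∫ ω', Real.exp (-γ * (xi ω - xi ω') ^ 2) ∂μ ∂μ ≤ 1 := by
    have hexp (t : ℝ) : ‖Real.exp (-γ * t ^ 2)‖ ≤ 1 := by
      rw [Real.norm_eq_abs, Real.abs_exp, Real.exp_le_one_iff]
      exact mul_nonpos_of_nonpos_of_nonneg (neg_nonpos.mpr hγ) (sq_nonneg t)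
    have hinner (ω : Ω) : ‖∫ ω', Real.exp (-γ * (xi ω - xi ω') ^ 2) ∂μ‖ ≤ 1 := by
      simpa using norm_integral_le_of_norm_le_const (μ := μ)
        (.of_forall fun ω' => hexp (xi ω - xi ω'))
    refine (le_abs_self _).trans ?_
    simpa using norm_integral_le_of_norm_le_const (μ := μ) (.of_forall hinner)
  have hfactor := hindep.symm.integral_integral_mul (hxS.prodMk hy) hxi
    (f := fun p q => p.2 * q.2 * κS p.1 q.1) (g := fun t t' => Real.exp (-γ * (t - t') ^ 2))
    (by fun_prop) (by fun_prop)
  exact hfactor.trans_le (mul_le_of_le_one_right hA hα)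
end

section
/- Under the hypotheses of the previous statement, if additionally γ > 0, A_S > 0, and x_i is not almost surely constant, then A_{S∪{i}} < A_S: adding the irrelevant feature strictly decreases the expected alignment. -/
/-! Independence of `xi` from `(xS, y)` lets the double integral factor as
`A_{S ∪ {i}} = α * A_S` with `α = E[exp (-γ (xi - xi')²)]`, where `xi'` is an independent copy.
Since `exp (-γ s²) < 1` for `s ≠ 0` and `xi` is not a.s. constant, already the inner integral
`t ↦ E[exp (-γ (t - xi)²)]` is `< 1` at every `t`, so `α < 1`, and `A_S > 0` gives the claim. -/

open MeasureTheory ProbabilityTheory Function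

namespace ProbabilityTheory

variable {Ω α β : Type*} [MeasurableSpace Ω] [MeasurableSpace α] [MeasurableSpace β]
  {μ : Measure Ω} [SFinite μ] {X : Ω → α} {Z : Ω → β}

theorem IndepFun.integral_integral_mul_eq_mul (hXZ : X ⟂ᵢ[μ] Z)
    (hX : Measurable X) (hZ : Measurable Z) {k : α → α → ℝ} {F : β → β → ℝ}
    (hk : Measurable (uncurry k)) (hF : Measurable (uncurry F)) :
    ∫ ω, ∫ ω', F (Z ω) (Z ω') * k (X ω) (X ω') ∂μ ∂μ
      = (∫ ω, ∫ ω', k (X ω) (X ω') ∂μ ∂μ) * ∫ ω, ∫ ω', F (Z ω) (Z ω') ∂μ ∂μ := by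
  have inner : ∀ ω, ∫ ω', F (Z ω) (Z ω') * k (X ω) (X ω') ∂μ
      = (∫ ω', k (X ω) (X ω') ∂μ) * ∫ ω', F (Z ω) (Z ω') ∂μ := fun ω => by
    simp_rw [mul_comm (F _ _)]
    exact hXZ.integral_fun_comp_mul_comp hX.aemeasurable hZ.aemeasurable
      (hk.of_uncurry_left.aestronglyMeasurable) (hF.of_uncurry_left.aestronglyMeasurable)
  have hk' : Measurable fun a => ∫ ω', k a (X ω') ∂μ :=
    (hk.comp (measurable_fst.prodMk (hX.comp measurable_snd))).stronglyMeasurable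
      |>.integral_prod_right'.measurable
  have hF' : Measurable fun b => ∫ ω', F b (Z ω') ∂μ :=
    (hF.comp (measurable_fst.prodMk (hZ.comp measurable_snd))).stronglyMeasurable
      |>.integral_prod_right'.measurable
  simp_rw [inner]
  exact hXZ.integral_fun_comp_mul_comp hX.aemeasurable hZ.aemeasurable
    hk'.aestronglyMeasurable hF'.aestronglyMeasurable

end ProbabilityTheory

section GaussianKernel

variable {Ω : Type*} [MeasurableSpace Ω] {μ : Measure Ω} [IsProbabilityMeasure μ]

theorem integral_lt_one_of_le_one {f : Ω → ℝ} (hf : Integrable f μ) (hle : ∀ ω, f ω ≤ 1)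
    (hlt : 0 < μ {ω | f ω < 1}) : ∫ ω, f ω ∂μ < 1 := by
  have hsupp : support (fun ω => 1 - f ω) = {ω | f ω < 1} := by
    ext ω
    rw [mem_support, Set.mem_ofPred_eq, (hle ω).lt_iff_ne, sub_ne_zero]
    exact ne_comm
  have hpos : 0 < ∫ ω, (1 - f ω) ∂μ := by
    rw [integral_pos_iff_support_of_nonneg (fun ω => sub_nonneg.2 (hle ω))
      ((integrable_const 1).sub hf), hsupp]
    exact hlt
  rw [integral_sub (integrable_const 1) hf] at hpos
  simpa using hpos

variable {γ : ℝ}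

theorem Real.exp_neg_mul_sq_le_one (hγ : 0 ≤ γ) (s : ℝ) : Real.exp (-γ * s ^ 2) ≤ 1 :=
  Real.exp_le_one_iff.2 (by nlinarith [sq_nonneg s])

theorem Real.exp_neg_mul_sq_lt_one (hγ : 0 < γ) {s : ℝ} (hs : s ≠ 0) :
    Real.exp (-γ * s ^ 2) < 1 :=
  Real.exp_lt_one_iff.2 (by nlinarith [pow_pos (abs_pos.2 hs) 2, sq_abs s])

variable {X : Ω → ℝ}

theorem integrable_exp_neg_mul_sq_sub (hX : Measurable X) (hγ : 0 ≤ γ) (t : ℝ) :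
    Integrable (fun ω => Real.exp (-γ * (t - X ω) ^ 2)) μ :=
  Integrable.of_bound (by fun_prop) 1 <| .of_forall fun ω => by
    rw [Real.norm_of_nonneg (Real.exp_pos _).le]
    exact Real.exp_neg_mul_sq_le_one hγ _

theorem integral_exp_neg_mul_sq_sub_le_one (hX : Measurable X) (hγ : 0 ≤ γ) (t : ℝ) :
    ∫ ω, Real.exp (-γ * (t - X ω) ^ 2) ∂μ ≤ 1 := by
  simpa using integral_mono (integrable_exp_neg_mul_sq_sub (μ := μ) hX hγ t)
    (integrable_const 1) fun ω => Real.exp_neg_mul_sq_le_one hγ (t - X ω)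

theorem integral_exp_neg_mul_sq_sub_lt_one (hX : Measurable X) (hγ : 0 < γ)
    (hX_const : ¬ ∃ c : ℝ, ∀ᵐ ω ∂μ, X ω = c) (t : ℝ) :
    ∫ ω, Real.exp (-γ * (t - X ω) ^ 2) ∂μ < 1 := by
  refine integral_lt_one_of_le_one (integrable_exp_neg_mul_sq_sub hX hγ.le t)
    (fun ω => Real.exp_neg_mul_sq_le_one hγ.le _) ?_
  have hne : 0 < μ {ω | X ω ≠ t} := by
    refine pos_iff_ne_zero.2 fun h => hX_const ⟨t, ?_⟩
    simpa [ae_iff] using h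
  refine hne.trans_le (measure_mono fun ω hω => ?_)
  exact Real.exp_neg_mul_sq_lt_one hγ (sub_ne_zero.2 (Ne.symm hω))

theorem integral_integral_exp_neg_mul_sq_sub_lt_one (hX : Measurable X) (hγ : 0 < γ)
    (hX_const : ¬ ∃ c : ℝ, ∀ᵐ ω ∂μ, X ω = c) :
    ∫ ω, ∫ ω', Real.exp (-γ * (X ω - X ω') ^ 2) ∂μ ∂μ < 1 := by
  have hmeas : Measurable fun t => ∫ ω', Real.exp (-γ * (t - X ω') ^ 2) ∂μ :=
    (show Measurable fun p : ℝ × Ω => Real.exp (-γ * (p.1 - X p.2) ^ 2) by fun_prop)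
      |>.stronglyMeasurable.integral_prod_right'.measurable
  have hint : Integrable (fun ω => ∫ ω', Real.exp (-γ * (X ω - X ω') ^ 2) ∂μ) μ :=
    Integrable.of_bound (hmeas.comp hX).aestronglyMeasurable 1 <| .of_forall fun ω => by
      rw [Real.norm_of_nonneg (integral_nonneg fun _ => (Real.exp_pos _).le)]
      exact integral_exp_neg_mul_sq_sub_le_one hX hγ.le _
  refine integral_lt_one_of_le_one hint
    (fun ω => integral_exp_neg_mul_sq_sub_le_one hX hγ.le _) ?_
  have huniv : {ω | ∫ ω', Real.exp (-γ * (X ω - X ω') ^ 2) ∂μ < 1} = Set.univ :=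
    Set.eq_univ_of_forall fun ω => integral_exp_neg_mul_sq_sub_lt_one hX hγ hX_const _
  simp only [huniv, measure_univ, zero_lt_one]

end GaussianKernel

theorem stmt6_general {Ω E : Type*} [MeasurableSpace Ω] [MeasurableSpace E]
    (μ : Measure Ω) [IsProbabilityMeasure μ]
    (y : Ω → ℝ) (xS : Ω → E) (xi : Ω → ℝ)
    (hy : Measurable y) (hxS : Measurable xS) (hxi : Measurable xi)
    (hindep : IndepFun xi (fun ω => (xS ω, y ω)) μ)
    (κS : E → E → ℝ) (hκm : Measurable fun p : E × E => κS p.1 p.2)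
    (γ : ℝ) (hγ : 0 < γ)
    (hAS : 0 < ∫ ω, ∫ ω', y ω * y ω' * κS (xS ω) (xS ω') ∂μ ∂μ)
    (hnc : ¬ ∃ c : ℝ, ∀ᵐ ω ∂μ, xi ω = c) :
    (∫ ω, ∫ ω', y ω * y ω' * κS (xS ω) (xS ω') *
        Real.exp (-γ * (xi ω - xi ω') ^ 2) ∂μ ∂μ)
      < ∫ ω, ∫ ω', y ω * y ω' * κS (xS ω) (xS ω') ∂μ ∂μ := by
  have hF : Measurable (uncurry fun (z z' : E × ℝ) => z.2 * z'.2 * κS z.1 z'.1) := by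
    unfold uncurry
    exact (by fun_prop : Measurable fun p : (E × ℝ) × (E × ℝ) => p.1.2 * p.2.2).mul
      (hκm.comp (f := fun p : (E × ℝ) × (E × ℝ) => (p.1.1, p.2.1)) (by fun_prop))
  have hk : Measurable (uncurry fun t t' : ℝ => Real.exp (-γ * (t - t') ^ 2)) := by
    unfold uncurry; fun_prop
  rw [hindep.integral_integral_mul_eq_mul hxi (hxS.prodMk hy) hk hF]
  exact mul_lt_of_lt_one_left hAS (integral_integral_exp_neg_mul_sq_sub_lt_one hxi hγ hnc)

theorem stmt6 {Ω E : Type*} [MeasurableSpace Ω] [MeasurableSpace E]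
    (μ : Measure Ω) [IsProbabilityMeasure μ]
    (y : Ω → ℝ) (xS : Ω → E) (xi : Ω → ℝ)
    (hy : Measurable y) (hxS : Measurable xS) (hxi : Measurable xi)
    (hyb : ∃ C : ℝ, ∀ ω, |y ω| ≤ C)
    (hindep : IndepFun xi (fun ω => (xS ω, y ω)) μ)
    (κS : E → E → ℝ) (hκm : Measurable fun p : E × E => κS p.1 p.2)
    (hκb : ∃ C : ℝ, ∀ e e', |κS e e'| ≤ C)
    (hpsd : ∀ (m : ℕ) (c : Fin m → ℝ) (p : Fin m → E),
      0 ≤ ∑ i, ∑ j, c i * c j * κS (p i) (p j))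
    (γ : ℝ) (hγ : 0 < γ)
    (hAS : 0 < ∫ ω, ∫ ω', y ω * y ω' * κS (xS ω) (xS ω') ∂μ ∂μ)
    (hnc : ¬ ∃ c : ℝ, ∀ᵐ ω ∂μ, xi ω = c) :
    (∫ ω, ∫ ω', y ω * y ω' * κS (xS ω) (xS ω') *
        Real.exp (-γ * (xi ω - xi ω') ^ 2) ∂μ ∂μ)
      < ∫ ω, ∫ ω', y ω * y ω' * κS (xS ω) (xS ω') ∂μ ∂μ :=
  stmt6_general μ y xS xi hy hxS hxi hindep κS hκm γ hγ hAS hnc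
end

section
/- Let S be a finite set of feature indices and γ > 0. Suppose the random variables {x_j}_{j∈S∪{i}} and y satisfy: x_i is independent of ({x_j}_{j∈S}, y), and define the contribution c_i = A_{S∪{i}} - A_S where A_T = E[y y' ∏_{j∈T} exp(-γ(x_j - x_j')²)] over iid pairs. Then c_i = (α - 1) A_S where α = E[exp(-γ(x_i - x_i')²)] ∈ (0,1]; in particular c_i ≤ 0. -/
/-!
Independence of `x i` from `(x_S, y)` splits the double integral defining `A (insert i S)` into
`α * A S`, first in the inner and then in the outer integral. The Gaussian kernel
`exp (-γ (a - b)²)` is, up to the factor `√(π / 4γ)`, the `L²` inner product of the bumps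
`t ↦ exp (-2γ (a - t)²)` and `t ↦ exp (-2γ (b - t)²)`; by Fubini, therefore,
`√(π / 4γ) ^ |S| * A S = ∫ (∫ y ω ∏ⱼ exp (-2γ (x j ω - t j)²) dμ)² dt ≥ 0`. Since the kernel
takes values in `(0, 1]`, so does `α`, and `(α - 1) A S ≤ 0`.
-/

open MeasureTheory ProbabilityTheory Real Function

section GaussianConvolution

lemma exp_mul_exp_sq_sub (γ a b t : ℝ) :
    exp (-(2 * γ) * (a - t) ^ 2) * exp (-(2 * γ) * (b - t) ^ 2)
      = exp (-(4 * γ) * (t - (a + b) / 2) ^ 2) * exp (-γ * (a - b) ^ 2) := by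
  rw [← exp_add, ← exp_add]
  ring_nf

lemma integral_exp_mul_exp_sq_sub (γ a b : ℝ) :
    ∫ t, exp (-(2 * γ) * (a - t) ^ 2) * exp (-(2 * γ) * (b - t) ^ 2)
      = √(π / (4 * γ)) * exp (-γ * (a - b) ^ 2) := by
  simp_rw [exp_mul_exp_sq_sub γ a b, integral_mul_const,
    integral_sub_right_eq_self (fun t => exp (-(4 * γ) * t ^ 2)), integral_gaussian]

lemma integrable_exp_mul_exp_sq_sub {γ : ℝ} (hγ : 0 < γ) (a b : ℝ) :
    Integrable fun t => exp (-(2 * γ) * (a - t) ^ 2) * exp (-(2 * γ) * (b - t) ^ 2) := by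
  simp_rw [exp_mul_exp_sq_sub γ a b]
  exact ((integrable_exp_neg_mul_sq (by positivity)).comp_sub_right _).mul_const _

variable {κ : Type*} [Fintype κ]

lemma integral_pi_exp_mul_exp_sq_sub (γ : ℝ) (a b : κ → ℝ) :
    ∫ t : κ → ℝ, ∏ j, exp (-(2 * γ) * (a j - t j) ^ 2) * exp (-(2 * γ) * (b j - t j) ^ 2)
      = √(π / (4 * γ)) ^ Fintype.card κ * ∏ j, exp (-γ * (a j - b j) ^ 2) := by
  rw [integral_fintype_prod_volume_eq_prod
    (fun j t => exp (-(2 * γ) * (a j - t) ^ 2) * exp (-(2 * γ) * (b j - t) ^ 2))]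
  simp_rw [integral_exp_mul_exp_sq_sub, Finset.prod_mul_distrib, Finset.prod_const,
    Finset.card_univ]

lemma integrable_pi_exp_mul_exp_sq_sub {γ : ℝ} (hγ : 0 < γ) (a b : κ → ℝ) :
    Integrable fun t : κ → ℝ =>
      ∏ j, exp (-(2 * γ) * (a j - t j) ^ 2) * exp (-(2 * γ) * (b j - t j) ^ 2) :=
  Integrable.fintype_prod
    (f := fun j t => exp (-(2 * γ) * (a j - t) ^ 2) * exp (-(2 * γ) * (b j - t) ^ 2))
    fun j => integrable_exp_mul_exp_sq_sub hγ (a j) (b j)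

end GaussianConvolution

lemma integral_integral_integral_mul_nonneg {Ω E : Type*} [MeasurableSpace Ω] [MeasurableSpace E]
    {μ : Measure Ω} {ν : Measure E} [SFinite μ] [SFinite ν] {f : Ω → E → ℝ}
    (hf : Integrable (fun q : (Ω × Ω) × E => f q.1.1 q.2 * f q.1.2 q.2) ((μ.prod μ).prod ν)) :
    0 ≤ ∫ ω, ∫ ω', ∫ t, f ω t * f ω' t ∂ν ∂μ ∂μ := by
  calc 0 ≤ ∫ t, (∫ ω, f ω t ∂μ) ^ 2 ∂ν := integral_nonneg fun t => sq_nonneg _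
    _ = ∫ t, ∫ p, f p.1 t * f p.2 t ∂μ.prod μ ∂ν := by
      refine integral_congr_ae (.of_forall fun t => ?_)
      exact (sq _).trans (integral_prod_mul (fun ω => f ω t) (fun ω => f ω t)).symm
    _ = ∫ q, f q.1.1 q.2 * f q.1.2 q.2 ∂(μ.prod μ).prod ν := (integral_prod_symm _ hf).symm
    _ = ∫ p, ∫ t, f p.1 t * f p.2 t ∂ν ∂μ.prod μ := integral_prod _ hf
    _ = ∫ ω, ∫ ω', ∫ t, f ω t * f ω' t ∂ν ∂μ ∂μ := integral_prod _ hf.integral_prod_left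

lemma integral_integral_mem_Ioc_zero_one {Ω : Type*} [MeasurableSpace Ω] {μ : Measure Ω}
    [IsProbabilityMeasure μ] {k : Ω → Ω → ℝ} (hk : Measurable (uncurry k))
    (hk01 : ∀ ω ω', k ω ω' ∈ Set.Ioc 0 1) : ∫ ω, ∫ ω', k ω ω' ∂μ ∂μ ∈ Set.Ioc 0 1 := by
  have hint : Integrable (fun p : Ω × Ω => k p.1 p.2) (μ.prod μ) :=
    .of_bound hk.aestronglyMeasurable 1 (.of_forall fun p => by
      rw [norm_of_nonneg (hk01 p.1 p.2).1.le]
      exact (hk01 p.1 p.2).2)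
  rw [← integral_prod _ hint]
  refine ⟨(integral_pos_iff_support_of_nonneg (fun p : Ω × Ω => (hk01 p.1 p.2).1.le) hint).2 ?_, ?_⟩
  · rw [support_eq_univ fun p : Ω × Ω => (hk01 p.1 p.2).1.ne']
    simp
  · simpa using integral_mono hint (integrable_const 1) fun p => (hk01 p.1 p.2).2

lemma ProbabilityTheory.IndepFun.integral_integral_mul_eq_mul_s11 {Ω 𝓧 𝓨 : Type*} [MeasurableSpace Ω]
    [MeasurableSpace 𝓧] [MeasurableSpace 𝓨] {μ : Measure Ω} [SFinite μ] {X : Ω → 𝓧} {Y : Ω → 𝓨}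
    (hXY : IndepFun X Y μ) (hX : Measurable X) (hY : Measurable Y)
    {φ : 𝓧 → 𝓧 → ℝ} {ψ : 𝓨 → 𝓨 → ℝ} (hφ : Measurable (uncurry φ)) (hψ : Measurable (uncurry ψ)) :
    ∫ ω, ∫ ω', φ (X ω) (X ω') * ψ (Y ω) (Y ω') ∂μ ∂μ =
      (∫ ω, ∫ ω', φ (X ω) (X ω') ∂μ ∂μ) * ∫ ω, ∫ ω', ψ (Y ω) (Y ω') ∂μ ∂μ := by
  have hΦ : Measurable fun a => ∫ ω', φ a (X ω') ∂μ :=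
    (hφ.comp (measurable_fst.prodMk (hX.comp measurable_snd))).stronglyMeasurable
      |>.integral_prod_right'.measurable
  have hΨ : Measurable fun b => ∫ ω', ψ b (Y ω') ∂μ :=
    (hψ.comp (measurable_fst.prodMk (hY.comp measurable_snd))).stronglyMeasurable
      |>.integral_prod_right'.measurable
  simp_rw [fun ω => hXY.integral_fun_comp_mul_comp hX.aemeasurable hY.aemeasurable
    hφ.of_uncurry_left.aestronglyMeasurable hψ.of_uncurry_left.aestronglyMeasurable (f := φ (X ω))
    (g := ψ (Y ω))]
  exact hXY.integral_fun_comp_mul_comp hX.aemeasurable hY.aemeasurable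
    hΦ.aestronglyMeasurable hΨ.aestronglyMeasurable

lemma exp_neg_mul_sq_mem_Ioc {γ : ℝ} (hγ : 0 ≤ γ) (d : ℝ) : exp (-γ * d ^ 2) ∈ Set.Ioc 0 1 :=
  ⟨exp_pos _, exp_le_one_iff.2 (by nlinarith [sq_nonneg d])⟩

section GaussianKernel

variable {Ω κ : Type*} [MeasurableSpace Ω] [Fintype κ] {μ : Measure Ω} [IsFiniteMeasure μ]
  {x : κ → Ω → ℝ} {y : Ω → ℝ} {C γ : ℝ}

lemma integrable_mul_prod_exp_mul_mul_prod_exp (hx : ∀ j, Measurable (x j)) (hy : Measurable y)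
    (hyb : ∀ ω, |y ω| ≤ C) (hγ : 0 < γ) :
    Integrable (fun q : (Ω × Ω) × (κ → ℝ) =>
      (y q.1.1 * ∏ j, exp (-(2 * γ) * (x j q.1.1 - q.2 j) ^ 2)) *
      (y q.1.2 * ∏ j, exp (-(2 * γ) * (x j q.1.2 - q.2 j) ^ 2))) ((μ.prod μ).prod volume) := by
  set c := √(π / (4 * γ)) ^ Fintype.card κ
  have hsplit : ∀ ω ω' (t : κ → ℝ),
      (y ω * ∏ j, exp (-(2 * γ) * (x j ω - t j) ^ 2)) *
          (y ω' * ∏ j, exp (-(2 * γ) * (x j ω' - t j) ^ 2))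
        = y ω * y ω' *
          ∏ j, exp (-(2 * γ) * (x j ω - t j) ^ 2) * exp (-(2 * γ) * (x j ω' - t j) ^ 2) := by
    intro ω ω' t
    rw [Finset.prod_mul_distrib, mul_mul_mul_comm]
  rw [integrable_prod_iff (by fun_prop)]
  simp_rw [hsplit]
  refine ⟨.of_forall fun p => (integrable_pi_exp_mul_exp_sq_sub hγ _ _).const_mul _, ?_⟩
  simp_rw [norm_mul,
    norm_of_nonneg (Finset.prod_nonneg fun j _ => (mul_pos (exp_pos _) (exp_pos _)).le),
    integral_const_mul, integral_pi_exp_mul_exp_sq_sub]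
  refine (integrable_const (C * C * c)).mono' (by fun_prop) (.of_forall fun p => ?_)
  have hC : 0 ≤ C := (abs_nonneg _).trans (hyb p.1)
  have hK : ∏ j, exp (-γ * (x j p.1 - x j p.2) ^ 2) ≤ 1 :=
    Finset.prod_le_one (fun j _ => (exp_pos _).le)
      fun j _ => (exp_neg_mul_sq_mem_Ioc hγ.le (x j p.1 - x j p.2)).2
  rw [norm_of_nonneg (by positivity)]
  calc _ ≤ C * C * (c * 1) := by gcongr <;> exact hyb _
    _ = C * C * c := by rw [mul_one]

lemma integral_integral_mul_prod_exp_sq_sub_nonneg (hx : ∀ j, Measurable (x j))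
    (hy : Measurable y) (hyb : ∀ ω, |y ω| ≤ C) (hγ : 0 < γ) :
    0 ≤ ∫ ω, ∫ ω', y ω * y ω' * ∏ j, exp (-γ * (x j ω - x j ω') ^ 2) ∂μ ∂μ := by
  have hc : 0 < √(π / (4 * γ)) ^ Fintype.card κ := by positivity
  have hkernel : ∀ ω ω',
      ∫ t : κ → ℝ, (y ω * ∏ j, exp (-(2 * γ) * (x j ω - t j) ^ 2)) *
        (y ω' * ∏ j, exp (-(2 * γ) * (x j ω' - t j) ^ 2))
      = √(π / (4 * γ)) ^ Fintype.card κ * (y ω * y ω' * ∏ j, exp (-γ * (x j ω - x j ω') ^ 2)) := by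
    intro ω ω'
    simp_rw [← mul_mul_mul_comm, ← Finset.prod_mul_distrib, integral_const_mul,
      integral_pi_exp_mul_exp_sq_sub]
    ring
  have h := integral_integral_integral_mul_nonneg
    (f := fun ω (t : κ → ℝ) => y ω * ∏ j, exp (-(2 * γ) * (x j ω - t j) ^ 2))
    (integrable_mul_prod_exp_mul_mul_prod_exp (μ := μ) hx hy hyb hγ)
  simp_rw [hkernel, integral_const_mul] at h
  exact nonneg_of_mul_nonneg_right h hc

end GaussianKernel

lemma prod_coe_sort_exp_sq_sub {Ω ι : Type*} {S : Finset ι} {x : ι → Ω → ℝ} (γ : ℝ) (ω ω' : Ω) :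
    ∏ j : S, exp (-γ * (x j ω - x j ω') ^ 2) = ∏ j ∈ S, exp (-γ * (x j ω - x j ω') ^ 2) :=
  Finset.prod_coe_sort S fun j => exp (-γ * (x j ω - x j ω') ^ 2)

section FeatureIndependence

variable {Ω ι : Type*} [MeasurableSpace Ω] {μ : Measure Ω} {S : Finset ι}
  {x : ι → Ω → ℝ} {y : Ω → ℝ}

lemma integral_integral_mul_prod_insert_exp_sq_sub [DecidableEq ι] [SFinite μ] {i : ι}
    (hi : i ∉ S) (hx : ∀ j, Measurable (x j)) (hy : Measurable y)
    (hindep : IndepFun (x i) (fun ω => ((fun j : S => x j ω), y ω)) μ) (γ : ℝ) :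
    ∫ ω, ∫ ω', y ω * y ω' * ∏ j ∈ insert i S, exp (-γ * (x j ω - x j ω') ^ 2) ∂μ ∂μ
      = (∫ ω, ∫ ω', exp (-γ * (x i ω - x i ω') ^ 2) ∂μ ∂μ) *
        ∫ ω, ∫ ω', y ω * y ω' * ∏ j ∈ S, exp (-γ * (x j ω - x j ω') ^ 2) ∂μ ∂μ := by
  have h := hindep.integral_integral_mul_eq_mul_s11 (hx i) (by fun_prop)
    (φ := fun a b => exp (-γ * (a - b) ^ 2)) (by fun_prop)
    (ψ := fun p q => p.2 * q.2 * ∏ j : S, exp (-γ * (p.1 j - q.1 j) ^ 2)) (by fun_prop)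
  simp only [prod_coe_sort_exp_sq_sub] at h
  rw [← h]
  congr with ω
  congr with ω'
  rw [Finset.prod_insert hi]
  ring

end FeatureIndependence

theorem stmt11 {Ω ι : Type*} [MeasurableSpace Ω] [DecidableEq ι]
    (μ : Measure Ω) [IsProbabilityMeasure μ]
    (S : Finset ι) (i : ι) (hi : i ∉ S)
    (x : ι → Ω → ℝ) (y : Ω → ℝ)
    (hx : ∀ j, Measurable (x j)) (hy : Measurable y)
    (hyb : ∃ C : ℝ, ∀ ω, |y ω| ≤ C)
    (hindep : IndepFun (x i) (fun ω => ((fun j : {j // j ∈ S} => x j ω), y ω)) μ)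
    (γ : ℝ) (hγ : 0 < γ) :
    letI A : Finset ι → ℝ := fun T =>
      ∫ ω, ∫ ω', y ω * y ω' * ∏ j ∈ T, Real.exp (-γ * (x j ω - x j ω') ^ 2) ∂μ ∂μ
    letI α : ℝ := ∫ ω, ∫ ω', Real.exp (-γ * (x i ω - x i ω') ^ 2) ∂μ ∂μ
    A (insert i S) - A S = (α - 1) * A S ∧ 0 < α ∧ α ≤ 1 ∧ A (insert i S) - A S ≤ 0 := by
  obtain ⟨C, hC⟩ := hyb
  beta_reduce
  rw [integral_integral_mul_prod_insert_exp_sq_sub hi hx hy hindep γ]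
  have hA_S : 0 ≤ ∫ ω, ∫ ω', y ω * y ω' * ∏ j ∈ S, exp (-γ * (x j ω - x j ω') ^ 2) ∂μ ∂μ := by
    simpa only [prod_coe_sort_exp_sq_sub] using
      integral_integral_mul_prod_exp_sq_sub_nonneg (μ := μ) (fun j : S => hx j) hy hC hγ
  have hα : ∫ ω, ∫ ω', exp (-γ * (x i ω - x i ω') ^ 2) ∂μ ∂μ ∈ Set.Ioc 0 1 :=
    integral_integral_mem_Ioc_zero_one (by fun_prop) fun ω ω' => exp_neg_mul_sq_mem_Ioc hγ.le _
  refine ⟨by ring, hα.1, hα.2, ?_⟩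
  nlinarith [hα.2]
end
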